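/- Let G be a module over a ring with an exhaustive increasing filtration F_• by submodules, and let N : G → G be a nilpotent module endomorphism with N(F_b) ⊆ F_{b+1} for all b. Assume every power of N is strict, i.e. N^a(F_b G) = F_{a+b} G ∩ N^a(G) for all a ≥ 0 and b ∈ ℤ. Then for every r ≥ 0 and ℓ ∈ ℤ, the induced map N^r : F_ℓ gr^W_r G → F_{ℓ+r} gr^W_{-r} G is an isomorphism, where W_• is the monodromy filtration of N and F_ℓ gr^W_r denotes the image of F_ℓ G ∩ W_r G in gr^W_r G. -/

import Mathlib

/-!
Injectivity on `gr^W_r` is one of the axioms of the monodromy filtration. For surjectivity,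
descending induction on the weight (starting where `W` vanishes) shows `W_{-r} ⊆ N^r(W_r)`,
so `y ∈ F_{ℓ+r} ∩ W_{-r}` lies in `F_{ℓ+r} ∩ N^r G`, which strictness identifies with
`N^r(F_ℓ)`: `y = N^r u` with `u ∈ F_ℓ`. Ascending induction (starting where `W` is everything)
shows that `N^r u ∈ W_{-r}` forces `u ∈ W_r`, so `u` is an exact preimage of `y`.
-/

/-- `W` is a monodromy filtration for the nilpotent endomorphism `N` of a module. -/
def IsMonodromyFiltration {R : Type*} [CommRing R] {G : Type*} [AddCommGroup G]
    [Module R G] (N : G →ₗ[R] G) (W : ℤ → Submodule R G) : Prop :=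
  Monotone W ∧ (∃ a : ℤ, W a = ⊥) ∧ (∃ b : ℤ, W b = ⊤) ∧
  (∀ ℓ : ℤ, (W ℓ).map N ≤ W (ℓ - 2)) ∧
  (∀ ℓ : ℕ,
    (∀ x ∈ W (ℓ : ℤ), (N ^ ℓ) x ∈ W (-(ℓ : ℤ) - 1) → x ∈ W ((ℓ : ℤ) - 1)) ∧
    (∀ y ∈ W (-(ℓ : ℤ)), ∃ x ∈ W (ℓ : ℤ), (N ^ ℓ) x - y ∈ W (-(ℓ : ℤ) - 1)))

namespace IsMonodromyFiltration

variable {R : Type*} [CommRing R] {G : Type*} [AddCommGroup G] [Module R G]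
  {N : G →ₗ[R] G} {W : ℤ → Submodule R G}

theorem pow_apply_mem (hW : IsMonodromyFiltration N W) (k : ℕ) {m : ℤ} {x : G}
    (hx : x ∈ W m) : (N ^ k) x ∈ W (m - 2 * k) := by
  induction k with
  | zero => simpa using hx
  | succ k ih =>
    rw [pow_succ', Module.End.mul_apply, show m - 2 * ((k + 1 : ℕ) : ℤ) = m - 2 * k - 2 by
      push_cast; ring]
    exact hW.2.2.2.1 _ ⟨_, ih, rfl⟩

theorem pow_apply_mem_of_le (hW : IsMonodromyFiltration N W) {k r : ℕ} (hrk : r ≤ k)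
    {x : G} (hx : x ∈ W k) : (N ^ (k - r)) x ∈ W r :=
  hW.1 (by omega) (hW.pow_apply_mem (k - r) hx)

theorem mem_of_pow_apply_mem (hW : IsMonodromyFiltration N W) {r : ℕ} {u : G}
    (hu : (N ^ r) u ∈ W (-r)) : u ∈ W r := by
  obtain ⟨hmono, -, ⟨b, hb⟩, -, hiso⟩ := id hW
  suffices key : ∀ n : ℤ, (r : ℤ) ≤ n → u ∈ W n → u ∈ W r from
    key (max b r) (le_max_right _ _) (hmono (le_max_left _ _) (hb ▸ Submodule.mem_top))
  intro n hrn
  induction n, hrn using Int.leInduction with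
  | base => exact id
  | succ n hrn ih =>
    intro hun
    lift n to ℕ using (Nat.cast_nonneg r).trans hrn
    have hNu : (N ^ (n + 1)) u ∈ W (-((n + 1 : ℕ) : ℤ) - 1) := by
      rw [show n + 1 = (n + 1 - r) + r by omega, pow_add, Module.End.mul_apply]
      exact hmono (by omega) (hW.pow_apply_mem (n + 1 - r) hu)
    exact ih (by simpa using (hiso (n + 1)).1 u (by exact_mod_cast hun) hNu)

theorem le_map_pow (hW : IsMonodromyFiltration N W) (r : ℕ) :
    W (-r) ≤ (W r).map (N ^ r) := by
  obtain ⟨hmono, ⟨a, ha⟩, -, -, hiso⟩ := id hW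
  suffices key : ∀ m : ℤ, min a (-r) ≤ m → m ≤ -r → W m ≤ (W r).map (N ^ r) from
    key (-r) (min_le_right _ _) le_rfl
  intro m ham
  induction m, ham using Int.leInduction with
  | base => exact fun _ => (hmono (min_le_left _ _)).trans (ha ▸ bot_le)
  | succ m _ ih =>
    intro hm y hy
    obtain ⟨n, hn⟩ : ∃ n : ℕ, m + 1 = -(n : ℤ) := ⟨(-(m + 1)).toNat, by omega⟩
    rw [hn] at hy
    have hrn : r ≤ n := by omega
    -- `y ≡ N^n z` modulo `W m`, and the error term is handled by the induction hypothesis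
    obtain ⟨z, hz, hzy⟩ := (hiso n).2 y hy
    obtain ⟨x, hx, hxz⟩ := ih (by omega) (show (N ^ n) z - y ∈ W m by
      rwa [show m = -(n : ℤ) - 1 by omega])
    refine ⟨(N ^ (n - r)) z - x, sub_mem (hW.pow_apply_mem_of_le hrn hz) hx, ?_⟩
    rw [map_sub, ← Module.End.mul_apply, ← pow_add, Nat.add_sub_cancel' hrn, hxz,
      sub_sub_cancel]

end IsMonodromyFiltration

theorem strict_powers_gr_iso_general
    (R : Type*) [CommRing R] (G : Type*) [AddCommGroup G] [Module R G]
    (N : G →ₗ[R] G)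
    (F : ℤ → Submodule R G)
    (hstrict : ∀ (a : ℕ) (b : ℤ),
      (F b).map (N ^ a) = F ((a : ℤ) + b) ⊓ LinearMap.range (N ^ a))
    (W : ℤ → Submodule R G) (hW : IsMonodromyFiltration N W)
    (r : ℕ) (ℓ : ℤ) :
    (∀ x ∈ F ℓ ⊓ W (r : ℤ), (N ^ r) x ∈ W (-(r : ℤ) - 1) → x ∈ W ((r : ℤ) - 1)) ∧
    (∀ y ∈ F (ℓ + r) ⊓ W (-(r : ℤ)),
      ∃ x ∈ F ℓ ⊓ W (r : ℤ), (N ^ r) x - y ∈ W (-(r : ℤ) - 1)) := by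
  refine ⟨fun x hx hNx => (hW.2.2.2.2 r).1 x hx.2 hNx, fun y ⟨hyF, hyW⟩ => ?_⟩
  obtain ⟨x, -, rfl⟩ := hW.le_map_pow r hyW
  have hmap : (N ^ r) x ∈ (F ℓ).map (N ^ r) := by
    rw [hstrict, add_comm]
    exact ⟨hyF, x, rfl⟩
  obtain ⟨u, hu, hux⟩ := hmap
  exact ⟨u, ⟨hu, hW.mem_of_pow_apply_mem (hux ▸ hyW)⟩, by simp [hux]⟩

/-- If every power of the nilpotent filtered endomorphism `N` is strict with respect
to the exhaustive increasing filtration `F`, then for every `r ≥ 0` and `ℓ ∈ ℤ` the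
induced map `N^r : F_ℓ gr^W_r G → F_{ℓ+r} gr^W_{-r} G` is an isomorphism, where `W`
is the monodromy filtration of `N` and `F_ℓ gr^W_r` is the image of `F ℓ ⊓ W r` in
`gr^W_r`.  Injectivity and surjectivity are expressed on representatives. -/
theorem strict_powers_gr_iso
    (R : Type*) [CommRing R] (G : Type*) [AddCommGroup G] [Module R G]
    (N : G →ₗ[R] G) (hN : IsNilpotent N)
    (F : ℤ → Submodule R G) (hFmono : Monotone F) (hFexh : (⨆ b : ℤ, F b) = ⊤)
    (hNF : ∀ b : ℤ, (F b).map N ≤ F (b + 1))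
    (hstrict : ∀ (a : ℕ) (b : ℤ),
      (F b).map (N ^ a) = F ((a : ℤ) + b) ⊓ LinearMap.range (N ^ a))
    (W : ℤ → Submodule R G) (hW : IsMonodromyFiltration N W)
    (r : ℕ) (ℓ : ℤ) :
    (∀ x ∈ F ℓ ⊓ W (r : ℤ), (N ^ r) x ∈ W (-(r : ℤ) - 1) → x ∈ W ((r : ℤ) - 1)) ∧
    (∀ y ∈ F (ℓ + r) ⊓ W (-(r : ℤ)),
      ∃ x ∈ F ℓ ⊓ W (r : ℤ), (N ^ r) x - y ∈ W (-(r : ℤ) - 1)) :=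
  strict_powers_gr_iso_general R G N F hstrict W hW r ℓ
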